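/- Let X be a random vector in ℝ^d with the Gaussian mixture density p(x) = Σ_{j=1}^k π_j (2π)^{−d/2} σ^{−d} exp(−‖x − μ_j‖²/(2σ²)). Suppose ε > 0 satisfies ε ≤ min_j ( π_j^{1/d} / (√(2π) σ e^{16}) )^d, and suppose the means satisfy min_{j ≠ k} ‖μ_j − μ_k‖ > 2σ max_j √( 2d log(1/(σ√(2π))) + 2 log(1/ε) − 2 log(1/π_j) ). Then P( p(X) < ε ) ≤ e^{−8d}. -/

import Mathlib

/-!
Write `c = (2π)^{-d/2} σ^{-d}`. The smallness assumption on `ε` says `ε ≤ wⱼ c e^{-16d}` for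
every `j`, so if `p(x) < ε` then already the `j`-th term `wⱼ c e^{-‖x - μⱼ‖²/(2σ²)}` of `p(x)`
is below `wⱼ c e^{-16d}`: the region `{p < ε}` lies at squared distance at least `32dσ²` from
every mean. A Chernoff bound with parameter `θ = 3/4` shows that each Gaussian component gives
this region mass at most `e^{-12d} 2^d ≤ e^{-8d}`, and averaging over the weights gives the claim.
-/

open MeasureTheory ProbabilityTheory Real

/-- The Gaussian mixture density on `ℝ^d` with means `μs`, common covariance `σ² I` and
weights `w`: `p(x) = ∑ⱼ wⱼ (2π)^{-d/2} σ^{-d} exp(-‖x - μⱼ‖²/(2σ²))`. -/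
noncomputable def gaussMixture (d k : ℕ) (w : Fin k → ℝ)
    (μs : Fin k → EuclideanSpace ℝ (Fin d)) (σ : ℝ)
    (x : EuclideanSpace ℝ (Fin d)) : ℝ :=
  ∑ j, w j * (2 * π) ^ (-(d : ℝ) / 2) * (1 / σ ^ d) * Real.exp (-‖x - μs j‖ ^ 2 / (2 * σ ^ 2))

open Module

noncomputable def isotropicGaussianConst (n : ℕ) (σ : ℝ) : ℝ :=
  (2 * π) ^ (-(n : ℝ) / 2) * (1 / σ ^ n)

lemma isotropicGaussianConst_pos (n : ℕ) {σ : ℝ} (hσ : 0 < σ) : 0 < isotropicGaussianConst n σ := by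
  unfold isotropicGaussianConst
  positivity

lemma isotropicGaussianConst_mul_rpow (n : ℕ) {σ θ : ℝ} (hσ : 0 < σ) (hθ : θ < 1) :
    isotropicGaussianConst n σ * (π / ((1 - θ) / (2 * σ ^ 2))) ^ (n / 2 : ℝ) =
      (1 - θ) ^ (-(n : ℝ) / 2) := by
  have h2π : 0 < 2 * π := by positivity
  have hθ' : 0 < 1 - θ := sub_pos.mpr hθ
  have hsplit : π / ((1 - θ) / (2 * σ ^ 2)) = 2 * π * σ ^ 2 * (1 - θ)⁻¹ := by
    field_simp
  rw [hsplit, mul_rpow (by positivity) (by positivity), mul_rpow h2π.le (by positivity),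
    ← rpow_natCast σ 2, ← rpow_mul hσ.le, inv_rpow hθ'.le, ← rpow_neg hθ'.le,
    isotropicGaussianConst, neg_div, rpow_neg h2π.le, ← rpow_natCast σ n]
  field_simp
  congr 2
  ring

lemma rpow_inv_div_sqrt_two_pi_mul_exp_pow {d : ℕ} (hd : d ≠ 0) {w σ : ℝ} (hw : 0 ≤ w)
    (hσ : 0 < σ) (a : ℝ) :
    (w ^ ((1 : ℝ) / d) / (√(2 * π) * σ * exp a)) ^ d =
      w * isotropicGaussianConst d σ * exp (-(a * d)) := by
  have h2π : 0 < 2 * π := by positivity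
  rw [div_pow, mul_pow, mul_pow, ← rpow_natCast, ← rpow_mul hw,
    one_div_mul_cancel (by exact_mod_cast hd), rpow_one, sqrt_eq_rpow, ← rpow_natCast (_ ^ _),
    ← rpow_mul h2π.le, ← exp_nat_mul, isotropicGaussianConst, exp_neg, neg_div, rpow_neg h2π.le]
  field_simp

lemma exp_mul_one_sub_rpow_le_exp_neg_eight_mul {d : ℝ} (hd : 0 ≤ d) :
    exp (-(3 / 4) * (16 * d)) * (1 - 3 / 4 : ℝ) ^ (-d / 2) ≤ exp (-8 * d) := by
  have hlog : log (1 - 3 / 4 : ℝ) = -(2 * log 2) := by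
    rw [show (1 - 3 / 4 : ℝ) = (2 ^ 2)⁻¹ by norm_num, log_inv, log_pow]
    push_cast
    ring
  rw [rpow_def_of_pos (by norm_num), ← exp_add, exp_le_exp, hlog]
  nlinarith [log_two_lt_d9]

section IsotropicGaussian

variable {V : Type*} [NormedAddCommGroup V] [InnerProductSpace ℝ V]

noncomputable def isotropicGaussianPDF (σ : ℝ) (m x : V) : ℝ :=
  isotropicGaussianConst (finrank ℝ V) σ * exp (-‖x - m‖ ^ 2 / (2 * σ ^ 2))

lemma isotropicGaussianPDF_nonneg {σ : ℝ} (hσ : 0 ≤ σ) (m x : V) :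
    0 ≤ isotropicGaussianPDF σ m x := by
  unfold isotropicGaussianPDF isotropicGaussianConst
  positivity

lemma le_sq_norm_sub_div_of_sum_mul_isotropicGaussianPDF_lt {ι : Type*} [Fintype ι]
    {w : ι → ℝ} (hw : ∀ j, 0 < w j) {σ : ℝ} (hσ : 0 < σ) {μs : ι → V} {x : V} {ε t : ℝ}
    (hx : ∑ j, w j * isotropicGaussianPDF σ (μs j) x < ε) (j : ι)
    (hε : ε ≤ w j * isotropicGaussianConst (finrank ℝ V) σ * exp (-t)) :
    t ≤ ‖x - μs j‖ ^ 2 / (2 * σ ^ 2) := by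
  have hterm : w j * isotropicGaussianPDF σ (μs j) x ≤
      ∑ i, w i * isotropicGaussianPDF σ (μs i) x :=
    Finset.single_le_sum (f := fun i => w i * isotropicGaussianPDF σ (μs i) x)
      (fun i _ => mul_nonneg (hw i).le (isotropicGaussianPDF_nonneg hσ.le _ _))
      (Finset.mem_univ j)
  have hwc : 0 < w j * isotropicGaussianConst (finrank ℝ V) σ :=
    mul_pos (hw j) (isotropicGaussianConst_pos _ hσ)
  have hlt : exp (-(‖x - μs j‖ ^ 2 / (2 * σ ^ 2))) < exp (-t) := by
    refine lt_of_mul_lt_mul_left ?_ hwc.le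
    have := hterm.trans_lt (hx.trans_le hε)
    rwa [isotropicGaussianPDF, ← mul_assoc, neg_div] at this
  linarith [exp_lt_exp.mp hlt]

variable [FiniteDimensional ℝ V] [MeasurableSpace V] [BorelSpace V]

lemma lintegral_exp_neg_mul_sq_norm_sub {b : ℝ} (hb : 0 < b) (m : V) :
    ∫⁻ x, ENNReal.ofReal (exp (-b * ‖x - m‖ ^ 2)) =
      ENNReal.ofReal ((π / b) ^ (finrank ℝ V / 2 : ℝ)) := by
  have hI := GaussianFourier.integral_rexp_neg_mul_sq_norm (V := V) hb
  have hint : Integrable fun x : V => exp (-b * ‖x‖ ^ 2) :=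
    Integrable.of_integral_ne_zero (by rw [hI]; positivity)
  rw [lintegral_sub_right_eq_self (fun x => ENNReal.ofReal (exp (-b * ‖x‖ ^ 2))) m,
    ← ofReal_integral_eq_lintegral_ofReal hint (ae_of_all _ fun _ => (exp_pos _).le), hI]

lemma setLIntegral_tail_isotropicGaussianPDF_le {σ θ : ℝ} (hσ : 0 < σ) (hθ₀ : 0 ≤ θ)
    (hθ₁ : θ < 1) (m : V) (t : ℝ) :
    ∫⁻ x in {x | t ≤ ‖x - m‖ ^ 2 / (2 * σ ^ 2)}, ENNReal.ofReal (isotropicGaussianPDF σ m x) ≤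
      ENNReal.ofReal (exp (-θ * t) * (1 - θ) ^ (-(finrank ℝ V : ℝ) / 2)) := by
  set S := {x : V | t ≤ ‖x - m‖ ^ 2 / (2 * σ ^ 2)}
  set c := isotropicGaussianConst (finrank ℝ V) σ
  set b := (1 - θ) / (2 * σ ^ 2)
  have hc : 0 < c := isotropicGaussianConst_pos _ hσ
  have hb : 0 < b := by
    have := sub_pos.mpr hθ₁
    positivity
  have hS : MeasurableSet S := measurableSet_le measurable_const (by fun_prop)
  -- Chernoff: `e^{-s} = e^{-θ s} e^{-(1-θ) s} ≤ e^{-θ t} e^{-(1-θ) s}` for `s ≥ t`.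
  have hpointwise :
      ∀ x ∈ S, isotropicGaussianPDF σ m x ≤ exp (-θ * t) * c * exp (-b * ‖x - m‖ ^ 2) := by
    intro x hx
    have hsplit : -‖x - m‖ ^ 2 / (2 * σ ^ 2) =
        -θ * (‖x - m‖ ^ 2 / (2 * σ ^ 2)) + -b * ‖x - m‖ ^ 2 := by
      ring
    rw [isotropicGaussianPDF, hsplit, exp_add, mul_left_comm, ← mul_assoc]
    gcongr ?_ * _ * _
    exact exp_le_exp.mpr (mul_le_mul_of_nonpos_left hx (neg_nonpos.mpr hθ₀))
  calc ∫⁻ x in S, ENNReal.ofReal (isotropicGaussianPDF σ m x)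
      ≤ ∫⁻ x in S, ENNReal.ofReal (exp (-θ * t) * c) * ENNReal.ofReal (exp (-b * ‖x - m‖ ^ 2)) :=
        setLIntegral_mono' hS fun x hx => by
          rw [← ENNReal.ofReal_mul (by positivity)]
          exact ENNReal.ofReal_le_ofReal (hpointwise x hx)
    _ ≤ ∫⁻ x, ENNReal.ofReal (exp (-θ * t) * c) * ENNReal.ofReal (exp (-b * ‖x - m‖ ^ 2)) :=
        setLIntegral_le_lintegral _ _
    _ = ENNReal.ofReal (exp (-θ * t) * (c * (π / b) ^ (finrank ℝ V / 2 : ℝ))) := by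
        rw [lintegral_const_mul' _ _ ENNReal.ofReal_ne_top, lintegral_exp_neg_mul_sq_norm_sub hb,
          ← ENNReal.ofReal_mul (by positivity), mul_assoc]
    _ = ENNReal.ofReal (exp (-θ * t) * (1 - θ) ^ (-(finrank ℝ V : ℝ) / 2)) := by
        rw [isotropicGaussianConst_mul_rpow _ hσ hθ₁]

lemma setLIntegral_sum_mul_isotropicGaussianPDF_le {ι : Type*} [Fintype ι] {w : ι → ℝ}
    (hw : ∀ j, 0 ≤ w j) (hw_sum : ∑ j, w j = 1) {σ θ : ℝ} (hσ : 0 < σ) (hθ₀ : 0 ≤ θ)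
    (hθ₁ : θ < 1) (μs : ι → V) {t : ℝ} {A : Set V}
    (hA : ∀ x ∈ A, ∀ j, t ≤ ‖x - μs j‖ ^ 2 / (2 * σ ^ 2)) :
    ∫⁻ x in A, ENNReal.ofReal (∑ j, w j * isotropicGaussianPDF σ (μs j) x) ≤
      ENNReal.ofReal (exp (-θ * t) * (1 - θ) ^ (-(finrank ℝ V : ℝ) / 2)) := by
  set B := ENNReal.ofReal (exp (-θ * t) * (1 - θ) ^ (-(finrank ℝ V : ℝ) / 2))
  have hpdf : ∀ j, AEMeasurable (fun x => ENNReal.ofReal (isotropicGaussianPDF σ (μs j) x))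
      (volume.restrict A) := fun j => by
    unfold isotropicGaussianPDF
    fun_prop
  calc ∫⁻ x in A, ENNReal.ofReal (∑ j, w j * isotropicGaussianPDF σ (μs j) x)
      = ∑ j, ENNReal.ofReal (w j) *
          ∫⁻ x in A, ENNReal.ofReal (isotropicGaussianPDF σ (μs j) x) := by
        simp_rw [ENNReal.ofReal_sum_of_nonneg fun j _ =>
          mul_nonneg (hw j) (isotropicGaussianPDF_nonneg hσ.le _ _), ENNReal.ofReal_mul (hw _)]
        rw [lintegral_finsetSum' _ fun j _ => (hpdf j).const_mul _]
        simp_rw [lintegral_const_mul' _ _ ENNReal.ofReal_ne_top]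
    _ ≤ ∑ j, ENNReal.ofReal (w j) * B := by
        gcongr with j
        exact (lintegral_mono_set fun x hx => hA x hx j).trans
          (setLIntegral_tail_isotropicGaussianPDF_le hσ hθ₀ hθ₁ (μs j) t)
    _ = B := by
        rw [← Finset.sum_mul, ← ENNReal.ofReal_sum_of_nonneg fun j _ => hw j, hw_sum,
          ENNReal.ofReal_one, one_mul]

end IsotropicGaussian

lemma gaussMixture_eq_sum (d k : ℕ) (w : Fin k → ℝ) (μs : Fin k → EuclideanSpace ℝ (Fin d))
    (σ : ℝ) (x : EuclideanSpace ℝ (Fin d)) :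
    gaussMixture d k w μs σ x = ∑ j, w j * isotropicGaussianPDF σ (μs j) x := by
  simp only [gaussMixture, isotropicGaussianPDF, isotropicGaussianConst,
    finrank_euclideanSpace_fin, mul_assoc]

theorem gaussian_mixture_low_density_probability_general (d k : ℕ) (hd : 0 < d)
    (σ : ℝ) (hσ : 0 < σ)
    (w : Fin k → ℝ) (hw_pos : ∀ j, 0 < w j) (hw_sum : ∑ j, w j = 1)
    (μs : Fin k → EuclideanSpace ℝ (Fin d))
    {Ω : Type*} [MeasurableSpace Ω] (P : Measure Ω)
    (X : Ω → EuclideanSpace ℝ (Fin d)) (hX : Measurable X)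
    (hlaw : P.map X = volume.withDensity (fun x => ENNReal.ofReal (gaussMixture d k w μs σ x)))
    (ε : ℝ)
    (hε_small : ∀ j, ε ≤ (w j ^ ((1 : ℝ) / d) / (Real.sqrt (2 * π) * σ * Real.exp 16)) ^ d) :
    P {ω | gaussMixture d k w μs σ (X ω) < ε} ≤ ENNReal.ofReal (Real.exp (-8 * d)) := by
  set A := {x | gaussMixture d k w μs σ x < ε}
  have hA : MeasurableSet A := measurableSet_lt (by unfold gaussMixture; fun_prop) measurable_const
  have hfar : ∀ x ∈ A, ∀ j, 16 * d ≤ ‖x - μs j‖ ^ 2 / (2 * σ ^ 2) := fun x hx j =>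
    le_sq_norm_sub_div_of_sum_mul_isotropicGaussianPDF_lt hw_pos hσ
      (by rwa [← gaussMixture_eq_sum]) j (by
        rw [finrank_euclideanSpace_fin,
          ← rpow_inv_div_sqrt_two_pi_mul_exp_pow hd.ne' (hw_pos j).le hσ]
        exact hε_small j)
  calc P (X ⁻¹' A)
      = ∫⁻ x in A, ENNReal.ofReal (gaussMixture d k w μs σ x) := by
        rw [← Measure.map_apply hX hA, hlaw, withDensity_apply _ hA]
    _ ≤ ENNReal.ofReal (exp (-(3 / 4) * (16 * d)) * (1 - 3 / 4 : ℝ) ^ (-(d : ℝ) / 2)) := by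
        simp_rw [gaussMixture_eq_sum]
        simpa [finrank_euclideanSpace_fin] using setLIntegral_sum_mul_isotropicGaussianPDF_le
          (fun j => (hw_pos j).le) hw_sum hσ (by norm_num) (by norm_num) μs hfar
    _ ≤ ENNReal.ofReal (exp (-8 * d)) :=
        ENNReal.ofReal_le_ofReal (exp_mul_one_sub_rpow_le_exp_neg_eight_mul d.cast_nonneg)

/-- Let `X` be a random vector with Gaussian mixture density `p`.  If
`ε ≤ min_j (π_j^{1/d} / (√(2π) σ e^{16}))^d` and the means satisfy
`min_{j≠l} ‖μ_j − μ_l‖ > 2σ max_j √(2d log(1/(σ√(2π))) + 2 log(1/ε) − 2 log(1/π_j))`,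
then `P(p(X) < ε) ≤ e^{−8d}`. -/
theorem gaussian_mixture_low_density_probability (d k : ℕ) (hd : 0 < d) (hk : 0 < k)
    (σ : ℝ) (hσ : 0 < σ)
    (w : Fin k → ℝ) (hw_pos : ∀ j, 0 < w j) (hw_sum : ∑ j, w j = 1)
    (μs : Fin k → EuclideanSpace ℝ (Fin d))
    {Ω : Type*} [MeasurableSpace Ω] (P : Measure Ω) [IsProbabilityMeasure P]
    (X : Ω → EuclideanSpace ℝ (Fin d)) (hX : Measurable X)
    (hlaw : P.map X = volume.withDensity (fun x => ENNReal.ofReal (gaussMixture d k w μs σ x)))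
    (ε : ℝ) (hε : 0 < ε)
    (hε_small : ∀ j, ε ≤ (w j ^ ((1 : ℝ) / d) / (Real.sqrt (2 * π) * σ * Real.exp 16)) ^ d)
    (hsep : ∀ j l, j ≠ l → ∀ j',
      2 * σ * Real.sqrt (2 * d * Real.log (1 / (σ * Real.sqrt (2 * π)))
          + 2 * Real.log (1 / ε) - 2 * Real.log (1 / w j')) < ‖μs j - μs l‖) :
    P {ω | gaussMixture d k w μs σ (X ω) < ε} ≤ ENNReal.ofReal (Real.exp (-8 * d)) :=
  gaussian_mixture_low_density_probability_general d k hd σ hσ w hw_pos hw_sum μs P X hX hlaw ε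
    hε_small
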